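/- arXiv:2004.08213 — 2 statements merged into one kernel-verified Lean document; each statement's English description precedes it below -/
import Mathlib

section
/- Firing-language characterization of the sequential (→) pattern: under the hypotheses below, the set of firing sequences of N from the marking •t₁ to the marking tₙ• is exactly the singleton {⟨t₁, t₂, ..., tₙ⟩}, i.e., ℒ_N(N, •t₁, tₙ•) = {⟨t₁,...,tₙ⟩}. -/
/-- A Petri net over a type `P` of places and a (disjoint) type `T` of
transitions, given by its flow relation `F ⊆ (P × T) ∪ (T × P)`,
represented as the two sets `pt` and `tp` of arcs. -/
structure PetriNet (P T : Type*) where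
  pt : Set (P × T)
  tp : Set (T × P)

variable {P T : Type*}

/-- The pre-set `•t` of a transition. -/
def preT (N : PetriNet P T) (t : T) : Set P := {p | (p, t) ∈ N.pt}

/-- The post-set `t•` of a transition. -/
def postT (N : PetriNet P T) (t : T) : Set P := {p | (t, p) ∈ N.tp}

/-- The pre-set `•p` of a place. -/
def preP (N : PetriNet P T) (p : P) : Set T := {t | (t, p) ∈ N.tp}

/-- The post-set `p•` of a place. -/
def postP (N : PetriNet P T) (p : P) : Set T := {t | (p, t) ∈ N.pt}

/-- A marking is a multiset over the places, i.e., a function `P → ℕ`. A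
transition `t` is enabled at `M` iff `M p > 0` for every `p ∈ •t`. -/
def Enabled (N : PetriNet P T) (M : P → ℕ) (t : T) : Prop :=
  ∀ p ∈ preT N t, 0 < M p

/-- Firing transition `t` transforms `M` into `(M \ •t) ⊎ t•`. -/
noncomputable def fire (N : PetriNet P T) (t : T) (M : P → ℕ) : P → ℕ :=
  fun p => M p - (preT N t).indicator 1 p + (postT N t).indicator 1 p

/-- `FSeq N M σ M'` : `σ` is a firing sequence of `N` from marking `M` to
marking `M'`. -/
inductive FSeq (N : PetriNet P T) : (P → ℕ) → List T → (P → ℕ) → Prop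
  | nil (M : P → ℕ) : FSeq N M [] M
  | cons (M : P → ℕ) (t : T) (σ : List T) (M' : P → ℕ) :
      Enabled N M t → FSeq N (fire N t M) σ M' → FSeq N M (t :: σ) M'

/-- The marking identifying a (finite) set of places with one token on each
of its elements. -/
noncomputable def mark (S : Set P) : P → ℕ := S.indicator 1

-- aux lemmas
lemma mark_pos_iff (A : Set P) (p : P) : 0 < mark A p ↔ p ∈ A := by
  classical
  unfold mark
  rw [Set.indicator_apply]
  split_ifs with h <;> simp [h]

lemma mark_inj {A B : Set P} (h : mark A = mark B) : A = B := by
  ext p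
  rw [← mark_pos_iff A p, ← mark_pos_iff B p, h]

lemma enabled_mark_iff (N : PetriNet P T) (A : Set P) (u : T) :
    Enabled N (mark A) u ↔ preT N u ⊆ A := by
  constructor
  · intro h p hp; exact (mark_pos_iff A p).1 (h p hp)
  · intro h p hp; exact (mark_pos_iff A p).2 (h hp)

lemma fire_mark_pre (N : PetriNet P T) (u : T) :
    fire N u (mark (preT N u)) = mark (postT N u) := by
  funext p; simp [fire, mark]

def Sseq (N : PetriNet P T) (t : ℕ → T) : ℕ → Set P :=
  fun i => if i = 0 then preT N (t 0) else postT N (t (i - 1))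

lemma fseq_nil_inv {N : PetriNet P T} {M M' : P → ℕ} (h : FSeq N M [] M') : M = M' := by
  cases h; rfl

lemma fseq_cons_inv {N : PetriNet P T} {M M' : P → ℕ} {u : T} {σ : List T}
    (h : FSeq N M (u :: σ) M') : Enabled N M u ∧ FSeq N (fire N u M) σ M' := by
  cases h; exact ⟨‹_›, ‹_›⟩


/-- Firing-language characterization of the sequential (→) pattern:
under the pattern hypotheses, the set of firing sequences of `N` from the
marking `•t₁` to the marking `tₙ•` is exactly `{⟨t₁,...,tₙ⟩}`. -/
theorem seq_pattern_lang (P T : Type*) [Finite P] [Finite T]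
    (N : PetriNet P T) (n : ℕ) (t : ℕ → T)
    (hn : 2 ≤ n)
    -- the transition set is exactly the pairwise-distinct `t 0, ..., t (n-1)`
    (hsurj : ∀ u : T, ∃ i < n, u = t i)
    (hinj : ∀ i < n, ∀ j < n, t i = t j → i = j)
    -- the place set is exactly `•t₁ ∪ t₁• ∪ ⋯ ∪ tₙ•`
    (hplaces : ∀ p : P, p ∈ preT N (t 0) ∨ ∃ i < n, p ∈ postT N (t i))
    -- (i) `•t₁ ≠ ∅`
    (h0 : (preT N (t 0)).Nonempty)
    -- (ii) for `1 ≤ i < n`, `tᵢ• ≠ ∅` and `tᵢ• = •t_{i+1}`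
    (h1 : ∀ i, i + 1 < n →
      (postT N (t i)).Nonempty ∧ postT N (t i) = preT N (t (i + 1)))
    -- (iii) for `1 ≤ i < n` and `p ∈ tᵢ•`, `•p = {tᵢ}` and `p• = {t_{i+1}}`
    (h2 : ∀ i, i + 1 < n → ∀ p ∈ postT N (t i),
      preP N p = {t i} ∧ postP N p = {t (i + 1)})
    -- (iv) every `p ∈ •t₁` has no incoming arc and `p• = {t₁}`
    (h3 : ∀ p ∈ preT N (t 0), preP N p = ∅ ∧ postP N p = {t 0})
    -- (v) `•t₁` is disjoint from every `tᵢ•`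
    (h4 : ∀ i < n, preT N (t 0) ∩ postT N (t i) = ∅) :
    {σ | FSeq N (mark (preT N (t 0))) σ (mark (postT N (t (n - 1))))} =
      {(List.range n).map t} := by
  set S := Sseq N t with hS
  have hS0 : S 0 = preT N (t 0) := by simp [hS, Sseq]
  have hSsucc : ∀ i, S (i + 1) = postT N (t i) := by intro i; simp [hS, Sseq]
  have hpre : ∀ i < n, preT N (t i) = S i := by
    intro i hi
    cases i with
    | zero => rw [hS0]
    | succ j => rw [hSsucc]; exact ((h1 j hi).2).symm
  have hSne : ∀ i < n, (S i).Nonempty := by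
    intro i hi
    cases i with
    | zero => rw [hS0]; exact h0
    | succ j => rw [hSsucc]; exact (h1 j hi).1
  have hdisj : ∀ i ≤ n, ∀ j < n, ((S j) ∩ (S i)).Nonempty → j = i := by
    rintro i hi j hj ⟨p, hpj, hpi⟩
    cases j with
    | zero =>
      cases i with
      | zero => rfl
      | succ i' =>
        exfalso
        rw [hS0] at hpj; rw [hSsucc] at hpi
        have h := h4 i' (by omega)
        exact absurd (Set.mem_inter hpj hpi) (by rw [h]; simp)
    | succ j' =>
      cases i with
      | zero =>
        exfalso
        rw [hSsucc] at hpj; rw [hS0] at hpi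
        have h := h4 j' (by omega)
        exact absurd (Set.mem_inter hpi hpj) (by rw [h]; simp)
      | succ i' =>
        rw [hSsucc] at hpj hpi
        have hp := (h2 j' hj p hpj).1
        have hmem : t i' ∈ preP N p := hpi
        rw [hp] at hmem
        have := hinj i' (by omega) j' (by omega) hmem
        omega
  have hfire : ∀ i < n, fire N (t i) (mark (S i)) = mark (S (i + 1)) := by
    intro i hi
    rw [← hpre i hi, fire_mark_pre, hSsucc]
  have hen : ∀ i ≤ n, ∀ u, Enabled N (mark (S i)) u → i < n ∧ u = t i := by
    intro i hi u hu
    obtain ⟨j, hj, rfl⟩ := hsurj u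
    rw [enabled_mark_iff, hpre j hj] at hu
    obtain ⟨p, hp⟩ := hSne j hj
    have hji := hdisj i hi j hj ⟨p, hp, hu hp⟩
    subst hji
    exact ⟨hj, rfl⟩
  have fwd : ∀ σ : List T, ∀ i ≤ n, FSeq N (mark (S i)) σ (mark (S n)) →
      σ = (List.range (n - i)).map (fun k => t (i + k)) := by
    intro σ
    induction σ with
    | nil =>
      intro i hi hseq
      have heq := mark_inj (fseq_nil_inv hseq)
      have hin : i = n := by
        by_contra hne
        have hi' : i < n := lt_of_le_of_ne hi hne
        obtain ⟨p, hp⟩ := hSne i hi'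
        exact hne (hdisj n le_rfl i hi' ⟨p, hp, heq ▸ hp⟩)
      subst hin
      simp
    | cons u σ' ih =>
      intro i hi hseq
      obtain ⟨henu, hrest⟩ := fseq_cons_inv hseq
      obtain ⟨hi', rfl⟩ := hen i hi u henu
      rw [hfire i hi'] at hrest
      have hσ' := ih (i + 1) (by omega) hrest
      subst hσ'
      rw [show n - i = (n - (i + 1)) + 1 by omega, List.range_succ_eq_map,
        List.map_cons, List.map_map]
      simp only [Nat.add_zero]
      congr 1
      exact (List.map_congr_left fun k _ => by simp only [Function.comp]; congr 1; omega).symm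
  have bwd : ∀ m i, i + m = n →
      FSeq N (mark (S i)) ((List.range m).map (fun k => t (i + k))) (mark (S n)) := by
    intro m
    induction m with
    | zero =>
      intro i hi
      have : i = n := by omega
      subst this
      simpa using FSeq.nil (N := N) _
    | succ m' ih =>
      intro i hi
      have hi' : i < n := by omega
      rw [List.range_succ_eq_map, List.map_cons, List.map_map]
      refine FSeq.cons _ _ _ _ ?_ ?_
      · rw [enabled_mark_iff]
        simp only [Nat.add_zero]
        rw [hpre i hi']
      · simp only [Nat.add_zero]
        rw [hfire i hi']
        have h := ih (i + 1) (by omega)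
        have : (List.range m').map ((fun k => t (i + k)) ∘ Nat.succ) =
            (List.range m').map (fun k => t (i + 1 + k)) :=
          List.map_congr_left fun k _ => by simp only [Function.comp]; congr 1; omega
        rw [this]
        exact h
  ext σ
  simp only [Set.mem_setOf_eq, Set.mem_singleton_iff]
  have e0 : preT N (t 0) = S 0 := hS0.symm
  have enn : postT N (t (n - 1)) = S n := by
    have h := hSsucc (n - 1)
    rw [show n - 1 + 1 = n by omega] at h
    exact h.symm
  rw [e0, enn]
  constructor
  · intro h
    have := fwd σ 0 (by omega) h
    simpa using this
  · intro h
    subst h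
    have := bwd n 0 (by omega)
    simpa using this
end

section
/- Firing-language characterization of the parallel (∧) pattern: under the hypotheses below, the set of firing sequences of N from the marking •t₁ ∪ ⋯ ∪ •tₙ to the marking t₁• ∪ ⋯ ∪ tₙ• is exactly the set of all sequences containing each of t₁,...,tₙ exactly once (i.e., all permutations of ⟨t₁,...,tₙ⟩, equivalently the shuffle ⟨t₁⟩ ⇋ ⟨t₂⟩ ⇋ ⋯ ⇋ ⟨tₙ⟩). -/
variable {P T : Type*}

/-! ### Auxiliary development -/

/-- intermediate marking set: post-sets of fired transitions (in `A`), pre-sets of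
unfired ones. -/
def MSet (N : PetriNet P T) (A : Set T) : Set P :=
  {p | (∃ u ∈ A, p ∈ postT N u) ∨ (∃ u ∉ A, p ∈ preT N u)}

section Aux

variable (N : PetriNet P T)
variable (hpreU : ∀ u v p, p ∈ preT N u → p ∈ preT N v → u = v)
variable (hpostU : ∀ u v p, p ∈ postT N u → p ∈ postT N v → u = v)
variable (hdisj : ∀ u v p, p ∈ preT N u → p ∈ postT N v → False)
variable (hpreN : ∀ u : T, (preT N u).Nonempty)

lemma mark_mem {S : Set P} {p : P} (h : p ∈ S) : mark S p = 1 := by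
  simp [mark, Set.indicator_of_mem h]

lemma mark_not_mem {S : Set P} {p : P} (h : p ∉ S) : mark S p = 0 := by
  simp [mark, Set.indicator_of_notMem h]

include hpreU hdisj in
lemma memMSet_pre {A : Set T} {u : T} {p : P} (hp : p ∈ preT N u) :
    p ∈ MSet N A ↔ u ∉ A := by
  constructor
  · rintro (⟨v, _, hv⟩ | ⟨v, hvA, hv⟩)
    · exact absurd (hdisj u v p hp hv) (by simp)
    · rwa [hpreU u v p hp hv]
  · intro h; exact Or.inr ⟨u, h, hp⟩

include hpostU hdisj in
lemma memMSet_post {A : Set T} {u : T} {p : P} (hp : p ∈ postT N u) :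
    p ∈ MSet N A ↔ u ∈ A := by
  constructor
  · rintro (⟨v, hvA, hv⟩ | ⟨v, _, hv⟩)
    · rwa [hpostU u v p hp hv]
    · exact absurd (hdisj v u p hv hp) (by simp)
  · intro h; exact Or.inl ⟨u, h, hp⟩

include hpreU hdisj in
lemma enabled_of_not_mem {A : Set T} {u : T} (hu : u ∉ A) :
    Enabled N (mark (MSet N A)) u := by
  intro p hp
  rw [mark_mem ((memMSet_pre N hpreU hdisj hp).2 hu)]
  norm_num

include hpreU hdisj hpreN in
lemma not_mem_of_enabled {A : Set T} {u : T}
    (h : Enabled N (mark (MSet N A)) u) : u ∉ A := by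
  intro huA
  obtain ⟨p, hp⟩ := hpreN u
  have h2 : p ∉ MSet N A := by
    rw [memMSet_pre N hpreU hdisj hp]; simp [huA]
  have := h p hp
  rw [mark_not_mem h2] at this
  exact absurd this (by simp)

include hpreU hpostU hdisj in
lemma fire_mset {A : Set T} {u : T} (hu : u ∉ A) :
    fire N u (mark (MSet N A)) = mark (MSet N (A ∪ {u})) := by
  funext p
  by_cases h1 : p ∈ preT N u
  · have hA : p ∈ MSet N A := (memMSet_pre N hpreU hdisj h1).2 hu
    have hA' : p ∉ MSet N (A ∪ {u}) := by
      rw [memMSet_pre N hpreU hdisj h1]; simp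
    have h2 : p ∉ postT N u := fun h2 => hdisj u u p h1 h2
    simp only [fire, mark_mem hA, mark_not_mem hA', Set.indicator_of_mem h1,
      Set.indicator_of_notMem h2, Pi.one_apply]
    norm_num
  · by_cases h2 : p ∈ postT N u
    · have hA : p ∉ MSet N A := by rw [memMSet_post N hpostU hdisj h2]; exact hu
      have hA' : p ∈ MSet N (A ∪ {u}) := (memMSet_post N hpostU hdisj h2).2 (by simp)
      simp only [fire, mark_not_mem hA, mark_mem hA', Set.indicator_of_mem h2,
        Set.indicator_of_notMem h1, Pi.one_apply]
      norm_num
    · have : p ∈ MSet N A ↔ p ∈ MSet N (A ∪ {u}) := by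
        constructor
        · rintro (⟨v, hvA, hv⟩ | ⟨v, hvA, hv⟩)
          · exact Or.inl ⟨v, Or.inl hvA, hv⟩
          · refine Or.inr ⟨v, ?_, hv⟩
            rintro (h | h)
            · exact hvA h
            · simp only [Set.mem_singleton_iff] at h; subst h; exact h1 hv
        · rintro (⟨v, hvA, hv⟩ | ⟨v, hvA, hv⟩)
          · rcases hvA with h | h
            · exact Or.inl ⟨v, h, hv⟩
            · simp only [Set.mem_singleton_iff] at h; subst h; exact absurd hv h2
          · exact Or.inr ⟨v, fun h => hvA (Or.inl h), hv⟩
      by_cases hA : p ∈ MSet N A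
      · simp only [fire, mark_mem hA, mark_mem (this.1 hA),
          Set.indicator_of_notMem h1, Set.indicator_of_notMem h2]
        norm_num
      · simp only [fire, mark_not_mem hA, mark_not_mem (fun h => hA (this.2 h)),
          Set.indicator_of_notMem h1, Set.indicator_of_notMem h2]
        norm_num

include hpreU hpostU hdisj in
lemma fwd (r : List T) (hr : r.Nodup) (σ : List T) (hσ : σ.Perm r) :
    FSeq N (mark (MSet N {u | u ∉ r})) σ (mark (MSet N Set.univ)) := by
  classical
  induction σ generalizing r with
  | nil =>
    have : r = [] := (List.Perm.nil_eq hσ).symm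
    subst this
    have : ({u : T | u ∉ ([] : List T)} : Set T) = Set.univ := by
      ext u; simp
    rw [this]
    exact FSeq.nil _
  | cons u σ' ih =>
    have hu : u ∈ r := hσ.subset (by simp)
    have hσ' : σ'.Perm (r.erase u) := by
      have h1 : r.Perm (u :: r.erase u) := List.perm_cons_erase hu
      exact (hσ.trans h1).cons_inv
    have hset : ({u' | u' ∉ r} : Set T) ∪ {u} = {u' | u' ∉ r.erase u} := by
      ext v
      simp only [Set.mem_union, Set.mem_setOf_eq, Set.mem_singleton_iff,
        List.Nodup.mem_erase_iff hr]
      tauto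
    refine FSeq.cons _ _ _ _ (enabled_of_not_mem N hpreU hdisj (by simp [hu])) ?_
    rw [fire_mset N hpreU hpostU hdisj (by simp [hu]), hset]
    exact ih (r.erase u) (hr.erase u) hσ'

include hpreU hpostU hdisj hpreN in
lemma mset_eq_univ {A : Set T} (h : mark (MSet N A) = mark (MSet N Set.univ)) :
    A = Set.univ := by
  ext u
  simp only [Set.mem_univ, iff_true]
  by_contra huA
  obtain ⟨p, hp⟩ := hpreN u
  have h1 : p ∈ MSet N A := (memMSet_pre N hpreU hdisj hp).2 huA
  have h2 : p ∉ MSet N Set.univ := by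
    rw [memMSet_pre N hpreU hdisj hp]; simp
  have := congrFun h p
  rw [mark_mem h1, mark_not_mem h2] at this
  exact absurd this (by simp)

include hpreU hpostU hdisj hpreN in
lemma bwd [DecidableEq T] {M M' : P → ℕ} {σ : List T} (h : FSeq N M σ M') :
    ∀ A : Set T, M = mark (MSet N A) → M' = mark (MSet N Set.univ) →
      (∀ u ∉ A, σ.count u = 1) ∧ (∀ u ∈ A, σ.count u = 0) := by
  induction h with
  | nil M =>
    intro A hM hM'
    have := mset_eq_univ N hpreU hpostU hdisj hpreN (hM ▸ hM')
    subst this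
    constructor
    · intro u hu; simp at hu
    · intro u _; simp
  | cons M u σ' M' hen _ ih =>
    intro A hM hM'
    subst hM
    have huA : u ∉ A := not_mem_of_enabled N hpreU hdisj hpreN hen
    have := ih (A ∪ {u}) (fire_mset N hpreU hpostU hdisj huA) hM'
    obtain ⟨ih1, ih2⟩ := this
    constructor
    · intro v hv
      by_cases hvu : v = u
      · subst hvu
        have := ih2 v (by simp)
        simp [List.count_cons, this]
      · have := ih1 v (by simp [hv, Ne.symm hvu, hvu])
        simp [List.count_cons, this, hvu, Ne.symm hvu]
    · intro v hv
      have hvu : v ≠ u := fun h => huA (h ▸ hv)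
      have := ih2 v (by simp [hv])
      simp [List.count_cons, this, hvu, Ne.symm hvu]

end Aux

/-- Firing-language characterization of the parallel (∧) pattern:
under the pattern hypotheses, the set of firing sequences of `N` from the
marking `•t₁ ∪ ⋯ ∪ •tₙ` to the marking `t₁• ∪ ⋯ ∪ tₙ•` is exactly the set of
all sequences containing each of `t₁,...,tₙ` exactly once, i.e., all
permutations of `⟨t₁,...,tₙ⟩`. -/


theorem par_pattern_lang (P T : Type*) [Finite P] [Finite T]
    (N : PetriNet P T) (n : ℕ) (t : ℕ → T)
    (hn : 2 ≤ n)
    -- the transition set is exactly the pairwise-distinct `t 0, ..., t (n-1)`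
    (hsurj : ∀ u : T, ∃ i < n, u = t i)
    (hinj : ∀ i < n, ∀ j < n, t i = t j → i = j)
    -- the place set is exactly `(•t₁ ∪ ⋯ ∪ •tₙ) ∪ (t₁• ∪ ⋯ ∪ tₙ•)`
    (hplaces : ∀ p : P, (∃ i < n, p ∈ preT N (t i)) ∨ ∃ i < n, p ∈ postT N (t i))
    -- (1) the pre-sets are nonempty and pairwise disjoint
    (hpre1 : ∀ i < n, (preT N (t i)).Nonempty)
    (hpre2 : ∀ i < n, ∀ j < n, i ≠ j → preT N (t i) ∩ preT N (t j) = ∅)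
    -- (2) the post-sets are nonempty and pairwise disjoint
    (hpost1 : ∀ i < n, (postT N (t i)).Nonempty)
    (hpost2 : ∀ i < n, ∀ j < n, i ≠ j → postT N (t i) ∩ postT N (t j) = ∅)
    -- (3) every `p ∈ •tᵢ` satisfies `p• = {tᵢ}`
    (h3 : ∀ i < n, ∀ p ∈ preT N (t i), postP N p = {t i})
    -- (4) every `p ∈ tᵢ•` satisfies `•p = {tᵢ}`
    (h4 : ∀ i < n, ∀ p ∈ postT N (t i), preP N p = {t i})
    -- (5) the union of the pre-sets and the union of the post-sets are disjoint
    (h5 : {p | ∃ i < n, p ∈ preT N (t i)} ∩ {p | ∃ i < n, p ∈ postT N (t i)} = ∅) :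
    {σ | FSeq N (mark {p | ∃ i < n, p ∈ preT N (t i)}) σ
        (mark {p | ∃ i < n, p ∈ postT N (t i)})} =
      {σ : List T | σ.Perm ((List.range n).map t)} := by
  classical
  -- transition-level hypotheses
  have hpreU : ∀ u v p, p ∈ preT N u → p ∈ preT N v → u = v := by
    intro u v p hu hv
    obtain ⟨i, hi, rfl⟩ := hsurj u
    obtain ⟨j, hj, rfl⟩ := hsurj v
    by_contra h
    have hij : i ≠ j := fun h' => h (h' ▸ rfl)
    have hmem : p ∈ preT N (t i) ∩ preT N (t j) := ⟨hu, hv⟩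
    rw [hpre2 i hi j hj hij] at hmem
    exact hmem
  have hpostU : ∀ u v p, p ∈ postT N u → p ∈ postT N v → u = v := by
    intro u v p hu hv
    obtain ⟨i, hi, rfl⟩ := hsurj u
    obtain ⟨j, hj, rfl⟩ := hsurj v
    by_contra h
    have hij : i ≠ j := fun h' => h (h' ▸ rfl)
    have hmem : p ∈ postT N (t i) ∩ postT N (t j) := ⟨hu, hv⟩
    rw [hpost2 i hi j hj hij] at hmem
    exact hmem
  have hdisj : ∀ u v p, p ∈ preT N u → p ∈ postT N v → False := by
    intro u v p hu hv
    obtain ⟨i, hi, rfl⟩ := hsurj u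
    obtain ⟨j, hj, rfl⟩ := hsurj v
    have hmem : p ∈ ({p | ∃ i < n, p ∈ preT N (t i)} : Set P) ∩
        {p | ∃ i < n, p ∈ postT N (t i)} := ⟨⟨i, hi, hu⟩, ⟨j, hj, hv⟩⟩
    rw [h5] at hmem
    exact hmem
  have hpreN : ∀ u : T, (preT N u).Nonempty := by
    intro u; obtain ⟨i, hi, rfl⟩ := hsurj u; exact hpre1 i hi
  -- the endpoint markings
  have hinit : ({p | ∃ i < n, p ∈ preT N (t i)} : Set P) = MSet N (∅ : Set T) := by
    ext p
    simp only [Set.mem_setOf_eq, MSet, Set.mem_empty_iff_false]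
    constructor
    · rintro ⟨i, _, hp⟩; exact Or.inr ⟨t i, by simp, hp⟩
    · rintro (⟨v, hv, _⟩ | ⟨v, _, hp⟩)
      · exact absurd hv (by simp)
      · obtain ⟨i, hi, rfl⟩ := hsurj v; exact ⟨i, hi, hp⟩
  have hfinal : ({p | ∃ i < n, p ∈ postT N (t i)} : Set P) = MSet N (Set.univ : Set T) := by
    ext p
    simp only [Set.mem_setOf_eq, MSet]
    constructor
    · rintro ⟨i, _, hp⟩; exact Or.inl ⟨t i, by simp, hp⟩
    · rintro (⟨v, _, hp⟩ | ⟨v, hv, _⟩)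
      · obtain ⟨i, hi, rfl⟩ := hsurj v; exact ⟨i, hi, hp⟩
      · exact absurd (Set.mem_univ v) hv
  set r : List T := (List.range n).map t with hr_def
  have hr_nodup : r.Nodup := by
    refine List.Nodup.map_on ?_ List.nodup_range
    intro i hi j hj hij
    exact hinj i (List.mem_range.1 hi) j (List.mem_range.1 hj) hij
  have hr_mem : ∀ u : T, u ∈ r := by
    intro u
    obtain ⟨i, hi, rfl⟩ := hsurj u
    exact List.mem_map_of_mem (f := t) (List.mem_range.2 hi)
  have hr_count : ∀ u : T, r.count u = 1 := fun u =>
    List.count_eq_one_of_mem hr_nodup (hr_mem u)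
  ext σ
  simp only [Set.mem_setOf_eq]
  rw [hinit, hfinal]
  constructor
  · intro h
    have := bwd N hpreU hpostU hdisj hpreN h ∅ rfl rfl
    rw [List.perm_iff_count]
    intro u
    rw [hr_count u, this.1 u (by simp)]
  · intro h
    have hcompl : ({u : T | u ∉ r} : Set T) = ∅ := by
      ext u; simp [hr_mem u]
    have := fwd N hpreU hpostU hdisj r hr_nodup σ h
    rwa [hcompl] at this
end
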